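/- Let R1, R2 : ℝ^n × ℝ^n → ℝ^n be twice continuously differentiable parametric residual maps with a common point z* such that R1(z*,z*) = R2(z*,z*) = 0, R1(z,z) = R2(z,z) for all z, ∂R1/∂z₁(z,z) = ∂R2/∂z₁(z,z) for all z, and ∂R1/∂z₁(z*,z*) is invertible. Then the C¹ solution maps Π1, Π2 defined locally by R1(Π1(w), w) = 0 and R2(Π2(w), w) = 0 satisfy DΠ1(z*) = DΠ2(z*); in particular the spectral radii of DΠ1(z*) and DΠ2(z*) (the asymptotic linear contraction rates of the two fixed-point iterations) are equal. -/

import Mathlib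

/-!
Differentiating `R (Π w, w) = 0` at the fixed point gives `D (DΠ v, v) = 0`, where `D` is the
full derivative of `R` at `(z*, z*)`; since `D` restricted to the first factor is invertible,
this determines `DΠ`. It therefore suffices that `DR₁ = DR₂` at `(z*, z*)`: the derivatives
agree on the first factor by hypothesis and along the diagonal because `R₁ = R₂` there, and
these two subspaces span `ℝⁿ × ℝⁿ`.
-/

open Filter Topology

namespace ContinuousLinearMap

variable {R M N P : Type*} [Semiring R] [TopologicalSpace M] [AddCommMonoid M] [Module R M]
  [TopologicalSpace N] [AddCommMonoid N] [Module R N]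
  [TopologicalSpace P] [AddCommGroup P] [Module R P]

theorem eq_of_comp_inl_eq_of_apply_diag_eq {A B : M × M →L[R] P}
    (hinl : A.comp (inl R M M) = B.comp (inl R M M)) (hdiag : ∀ v, A (v, v) = B (v, v)) :
    A = B := by
  refine prod_ext hinl (ext fun v => ?_)
  have hsplit : ∀ C : M × M →L[R] P, C (v, v) = C (v, 0) + C (0, v) := fun C => by
    rw [← map_add, Prod.mk_add_mk, add_zero, zero_add]
  have hv : A (v, 0) = B (v, 0) := congr($hinl v)
  have hvv := hdiag v
  rw [hsplit A, hsplit B, hv] at hvv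
  exact add_left_cancel hvv

theorem eq_of_apply_prodMk_eq_zero {D : M × N →L[R] P}
    (hinj : Function.Injective (D.comp (inl R M N))) {L₁ L₂ : N →L[R] M}
    (h₁ : ∀ v, D (L₁ v, v) = 0) (h₂ : ∀ v, D (L₂ v, v) = 0) : L₁ = L₂ := by
  ext1 v
  apply hinj
  have hsplit : ∀ x, D (x, v) = D (x, 0) + D (0, v) := fun x => by
    rw [← map_add, Prod.mk_add_mk, add_zero, zero_add]
  have e₁ := h₁ v
  have e₂ := h₂ v
  rw [hsplit] at e₁ e₂
  exact add_right_cancel (e₁.trans e₂.symm)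

end ContinuousLinearMap

section Calculus

open ContinuousLinearMap

variable {𝕜 E F G : Type*} [NontriviallyNormedField 𝕜]
  [NormedAddCommGroup E] [NormedSpace 𝕜 E] [NormedAddCommGroup F] [NormedSpace 𝕜 F]
  [NormedAddCommGroup G] [NormedSpace 𝕜 G]

theorem DifferentiableAt.fderiv_partial_left {f : E × F → G} {x : E} {y : F}
    (hf : DifferentiableAt 𝕜 f (x, y)) :
    fderiv 𝕜 (fun x' => f (x', y)) x = (fderiv 𝕜 f (x, y)).comp (inl 𝕜 E F) :=
  (hf.hasFDerivAt.comp (f := (·, y)) x (hasFDerivAt_prodMk_left x y)).fderiv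

theorem fderiv_eq_of_eventuallyEq_diag_of_fderiv_partial_left_eq {f g : E × E → F} {x : E}
    (hf : DifferentiableAt 𝕜 f (x, x)) (hg : DifferentiableAt 𝕜 g (x, x))
    (hdiag : (fun z => f (z, z)) =ᶠ[𝓝 x] fun z => g (z, z))
    (hleft : fderiv 𝕜 (fun y => f (y, x)) x = fderiv 𝕜 (fun y => g (y, x)) x) :
    fderiv 𝕜 f (x, x) = fderiv 𝕜 g (x, x) := by
  have hdup : HasFDerivAt (fun z => (z, z)) ((ContinuousLinearMap.id 𝕜 E).prod
      (ContinuousLinearMap.id 𝕜 E)) x := (hasFDerivAt_id x).prodMk (hasFDerivAt_id x)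
  have hDdiag := ((hf.hasFDerivAt.comp (f := fun z => (z, z)) x hdup).congr_of_eventuallyEq
      hdiag.symm).unique (hg.hasFDerivAt.comp (f := fun z => (z, z)) x hdup)
  refine eq_of_comp_inl_eq_of_apply_diag_eq ?_ fun v => congr($hDdiag v)
  rwa [hf.fderiv_partial_left, hg.fderiv_partial_left] at hleft

theorem HasFDerivAt.apply_prodMk_eq_zero_of_eventually {R : E × F → G} {D : E × F →L[𝕜] G}
    {π : F → E} {L : F →L[𝕜] E} {w : F} (hR : HasFDerivAt R D (π w, w))
    (hπ : HasFDerivAt π L w) (hsol : ∀ᶠ v in 𝓝 w, R (π v, v) = 0) (v : F) :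
    D (L v, v) = 0 := by
  have hgraph := hR.comp (f := fun v => (π v, v)) w (hπ.prodMk (hasFDerivAt_id w))
  have hD := (hgraph.congr_of_eventuallyEq (EventuallyEq.symm hsol)).unique (hasFDerivAt_const 0 w)
  exact congr($hD v)

end Calculus

theorem stmt_5_general (n : ℕ)
    (R1 R2 : (Fin n → ℝ) × (Fin n → ℝ) → (Fin n → ℝ)) (zs : Fin n → ℝ)
    (hR1 : ContDiff ℝ 2 R1) (hR2 : ContDiff ℝ 2 R2)
    (hval : ∀ z : Fin n → ℝ, R1 (z, z) = R2 (z, z))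
    (hdz1 : ∀ z : Fin n → ℝ,
      fderiv ℝ (fun x => R1 (x, z)) z = fderiv ℝ (fun x => R2 (x, z)) z)
    (e : (Fin n → ℝ) ≃L[ℝ] (Fin n → ℝ))
    (he : (e : (Fin n → ℝ) →L[ℝ] (Fin n → ℝ)) = fderiv ℝ (fun z => R1 (z, zs)) zs) :
    ∀ U : Set (Fin n → ℝ), IsOpen U → zs ∈ U →
    ∀ Pi1 Pi2 : (Fin n → ℝ) → (Fin n → ℝ),
      ContDiffOn ℝ 1 Pi1 U → ContDiffOn ℝ 1 Pi2 U →
      Pi1 zs = zs → Pi2 zs = zs →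
      (∀ w ∈ U, R1 (Pi1 w, w) = 0) → (∀ w ∈ U, R2 (Pi2 w, w) = 0) →
      fderiv ℝ Pi1 zs = fderiv ℝ Pi2 zs ∧
      sSup ((‖·‖ : ℂ → ℝ) '' spectrum ℂ
          ((LinearMap.toMatrix' (fderiv ℝ Pi1 zs).toLinearMap).map (Complex.ofReal ·))) =
        sSup ((‖·‖ : ℂ → ℝ) '' spectrum ℂ
          ((LinearMap.toMatrix' (fderiv ℝ Pi2 zs).toLinearMap).map (Complex.ofReal ·))) := by
  intro U hU hzsU Pi1 Pi2 hPi1 hPi2 hfix1 hfix2 hsol1 hsol2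
  have hU_nhds : U ∈ 𝓝 zs := hU.mem_nhds hzsU
  have hR1zs : DifferentiableAt ℝ R1 (zs, zs) := hR1.differentiable two_ne_zero _
  have hR2zs : DifferentiableAt ℝ R2 (zs, zs) := hR2.differentiable two_ne_zero _
  have hDR : fderiv ℝ R1 (zs, zs) = fderiv ℝ R2 (zs, zs) :=
    fderiv_eq_of_eventuallyEq_diag_of_fderiv_partial_left_eq hR1zs hR2zs
      (.of_forall hval) (hdz1 zs)
  have hDPi1 : HasFDerivAt Pi1 (fderiv ℝ Pi1 zs) zs :=
    ((hPi1.differentiableOn one_ne_zero).differentiableAt hU_nhds).hasFDerivAt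
  have hDPi2 : HasFDerivAt Pi2 (fderiv ℝ Pi2 zs) zs :=
    ((hPi2.differentiableOn one_ne_zero).differentiableAt hU_nhds).hasFDerivAt
  have hDR1 : HasFDerivAt R1 (fderiv ℝ R1 (zs, zs)) (Pi1 zs, zs) := by
    rw [hfix1]; exact hR1zs.hasFDerivAt
  have hDR2 : HasFDerivAt R2 (fderiv ℝ R1 (zs, zs)) (Pi2 zs, zs) := by
    rw [hfix2, hDR]; exact hR2zs.hasFDerivAt
  have hlin1 := hDR1.apply_prodMk_eq_zero_of_eventually hDPi1 (eventually_of_mem hU_nhds hsol1)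
  have hlin2 := hDR2.apply_prodMk_eq_zero_of_eventually hDPi2 (eventually_of_mem hU_nhds hsol2)
  have hinj : Function.Injective ((fderiv ℝ R1 (zs, zs)).comp (.inl ℝ _ _)) := by
    rw [← hR1zs.fderiv_partial_left, ← he]
    exact e.injective
  have hDPi : fderiv ℝ Pi1 zs = fderiv ℝ Pi2 zs :=
    ContinuousLinearMap.eq_of_apply_prodMk_eq_zero hinj hlin1 hlin2
  exact ⟨hDPi, by rw [hDPi]⟩

/-- two parametric residual maps agreeing on the diagonal (in value
and in the partial derivative w.r.t. the unknown) have solution maps with equal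
Jacobians at the common fixed point; in particular the spectral radii
(asymptotic linear contraction rates) coincide. -/
theorem stmt_5 (n : ℕ)
    (R1 R2 : (Fin n → ℝ) × (Fin n → ℝ) → (Fin n → ℝ)) (zs : Fin n → ℝ)
    (hR1 : ContDiff ℝ 2 R1) (hR2 : ContDiff ℝ 2 R2)
    (hzero : R1 (zs, zs) = 0)
    (hval : ∀ z : Fin n → ℝ, R1 (z, z) = R2 (z, z))
    (hdz1 : ∀ z : Fin n → ℝ,
      fderiv ℝ (fun x => R1 (x, z)) z = fderiv ℝ (fun x => R2 (x, z)) z)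
    (e : (Fin n → ℝ) ≃L[ℝ] (Fin n → ℝ))
    (he : (e : (Fin n → ℝ) →L[ℝ] (Fin n → ℝ)) = fderiv ℝ (fun z => R1 (z, zs)) zs) :
    ∀ U : Set (Fin n → ℝ), IsOpen U → zs ∈ U →
    ∀ Pi1 Pi2 : (Fin n → ℝ) → (Fin n → ℝ),
      ContDiffOn ℝ 1 Pi1 U → ContDiffOn ℝ 1 Pi2 U →
      Pi1 zs = zs → Pi2 zs = zs →
      (∀ w ∈ U, R1 (Pi1 w, w) = 0) → (∀ w ∈ U, R2 (Pi2 w, w) = 0) →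
      fderiv ℝ Pi1 zs = fderiv ℝ Pi2 zs ∧
      sSup ((‖·‖ : ℂ → ℝ) '' spectrum ℂ
          ((LinearMap.toMatrix' (fderiv ℝ Pi1 zs).toLinearMap).map (Complex.ofReal ·))) =
        sSup ((‖·‖ : ℂ → ℝ) '' spectrum ℂ
          ((LinearMap.toMatrix' (fderiv ℝ Pi2 zs).toLinearMap).map (Complex.ofReal ·))) :=
  stmt_5_general n R1 R2 zs hR1 hR2 hval hdz1 e he
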